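/- There exists a class F of real-valued functions on finite sequences of reals with pseudo-dimension Pdim(F) = 1, such that the end-to-end class after just T = 2 autoregressive iterations has infinite pseudo-dimension. -/
import Mathlib


def applyAppend (f : List ℝ → ℝ) (x : List ℝ) : List ℝ := x ++ [f x]

/-- end-to-end map after `T` autoregressive iterations, over real tokens. -/
def e2eR (f : List ℝ → ℝ) (T : ℕ) (x : List ℝ) : ℝ :=
  ((applyAppend f)^[T] x).getLastD 0

def e2eClassR (F : Set (List ℝ → ℝ)) (T : ℕ) : Set (List ℝ → ℝ) :=
  (fun f => e2eR f T) '' F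

/-- Pseudo-shattering: there are `d` points and thresholds realizing all `2^d`
sign patterns `sign(h(x_i) − θ_i)`. -/
def PShatters {X : Type*} (H : Set (X → ℝ)) (d : ℕ) : Prop :=
  ∃ x : Fin d → X, ∃ θ : Fin d → ℝ,
    ∀ b : Fin d → Bool, ∃ h ∈ H, ∀ i, (θ i ≤ h (x i) ↔ b i = true)

noncomputable def decodeB (a c : ℝ) : ℝ := if (⌊c⌋₊).testBit ⌊a⌋₊ then 1 else 0

noncomputable def myF (c : ℝ) : List ℝ → ℝ := fun x =>
  match x with
  | [a, b] => decodeB a b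
  | _ => c

lemma myF_not_pair (c : ℝ) {x : List ℝ} (h : ∀ a b : ℝ, x ≠ [a, b]) : myF c x = c := by
  match x with
  | [] => rfl
  | [_] => rfl
  | [a, b] => exact absurd rfl (h a b)
  | _ :: _ :: _ :: _ => rfl

lemma exists_nat_testBit {D : ℕ} (b : Fin D → Bool) :
    ∃ N : ℕ, ∀ i : Fin D, N.testBit i = b i := by
  induction D with
  | zero => exact ⟨0, fun i => i.elim0⟩
  | succ D ih =>
    obtain ⟨N, hN⟩ := ih (fun i => b i.succ)
    refine ⟨Nat.bit (b 0) N, fun i => ?_⟩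
    refine Fin.cases ?_ (fun j => ?_) i
    · exact Nat.testBit_bit_zero _ _
    · simpa using (Nat.testBit_bit_succ j (b 0) N).trans (hN j)

lemma e2e_myF (c a : ℝ) : e2eR (myF c) 2 [a] = decodeB a c := by
  show ((applyAppend (myF c))^[2] [a]).getLastD 0 = _
  rw [Function.iterate_succ_apply, Function.iterate_succ_apply, Function.iterate_zero_apply]
  simp [applyAppend, myF]

/-- there is a class `F` of real-valued functions on finite real
sequences with pseudo-dimension exactly `1`, while the end-to-end class after
`T = 2` autoregressive iterations has infinite pseudo-dimension (it
pseudo-shatters sets of every size). -/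
theorem exists_class_pdim_explodes :
    ∃ F : Set (List ℝ → ℝ),
      PShatters F 1 ∧ (∀ d, PShatters F d → d ≤ 1) ∧
      (∀ D : ℕ, PShatters (e2eClassR F 2) D) := by
  refine ⟨Set.range myF, ?_, ?_, ?_⟩
  · -- shatters one point
    refine ⟨fun _ => [], fun _ => 1, fun b => ?_⟩
    refine ⟨myF (if b 0 then 1 else 0), ⟨_, rfl⟩, fun i => ?_⟩
    have : i = 0 := Subsingleton.elim _ _
    subst this
    show (1 : ℝ) ≤ (if b 0 then (1:ℝ) else 0) ↔ b 0 = true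
    cases h : b 0 <;> simp [h]
  · -- cannot shatter two points
    intro d hd
    by_contra hle
    push_neg at hle
    obtain ⟨x, θ, hx⟩ := hd
    have h2 : (2 : ℕ) ≤ d := hle
    set i0 : Fin d := ⟨0, by omega⟩
    set i1 : Fin d := ⟨1, by omega⟩
    have hne : i0 ≠ i1 := by simp [i0, i1, Fin.ext_iff]
    -- the value of h on a point is either fixed (pair) or equal to the parameter c
    have key : ∀ i : Fin d, (∃ a b : ℝ, x i = [a, b]) ∨ (∀ c : ℝ, myF c (x i) = c) := by
      intro i
      by_cases hp : ∃ a b : ℝ, x i = [a, b]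
      · exact Or.inl hp
      · push_neg at hp
        exact Or.inr fun c => myF_not_pair c hp
    -- if x i is a pair, all h ∈ F agree on it, so both bool values for coordinate i
    -- give a contradiction
    have fixed : ∀ i : Fin d, (∃ a b : ℝ, x i = [a, b]) → False := by
      rintro i ⟨a, b, hab⟩
      have hval : ∀ c : ℝ, myF c (x i) = decodeB a b := by intro c; rw [hab]; rfl
      obtain ⟨h1, ⟨c1, rfl⟩, H1⟩ := hx (fun _ => true)
      obtain ⟨h0, ⟨c0, rfl⟩, H0⟩ := hx (fun _ => false)
      have := (H1 i).mpr rfl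
      rw [hval] at this
      have h0' := (H0 i)
      rw [hval] at h0'
      simp [this] at h0'
    have c0 := (key i0).resolve_left (fixed i0)
    have c1 := (key i1).resolve_left (fixed i1)
    -- both points evaluate to the constant c; get contradiction from two patterns
    obtain ⟨h1, ⟨a1, rfl⟩, H1⟩ := hx (fun j => j = i0)
    obtain ⟨h2', ⟨a2, rfl⟩, H2⟩ := hx (fun j => j = i1)
    have A1 : θ i0 ≤ a1 := by
      have := (H1 i0).mpr (by simp); rwa [c0] at this
    have B1 : ¬ θ i1 ≤ a1 := by
      intro h; have := (H1 i1).mp (by rwa [c1]); simp [hne.symm] at this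
    have A2 : θ i1 ≤ a2 := by
      have := (H2 i1).mpr (by simp); rwa [c1] at this
    have B2 : ¬ θ i0 ≤ a2 := by
      intro h; have := (H2 i0).mp (by rwa [c0]); simp [hne] at this
    push_neg at B1 B2
    linarith
  · -- e2e class shatters every size
    intro D
    refine ⟨fun i => [(i : ℕ)], fun _ => 1, fun b => ?_⟩
    obtain ⟨N, hN⟩ := exists_nat_testBit b
    refine ⟨e2eR (myF (N : ℝ)) 2, ⟨myF (N : ℝ), ⟨_, rfl⟩, rfl⟩, fun i => ?_⟩
    rw [e2e_myF]
    have : decodeB ((i : ℕ) : ℝ) ((N : ℝ)) = if b i then 1 else 0 := by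
      rw [decodeB, Nat.floor_natCast, Nat.floor_natCast, hN]
    rw [this]
    cases h : b i <;> simp
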